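/- Let G be a connected finite weighted graph with positive edge weights, let u and v be two vertices of G, and let T be a common distance-preserving spanning tree of u and v in G. Let P = (u = v_0, v_1, ..., v_k = v) be the unique shortest u-v path in G, and for 0 ≤ i ≤ k let V_i = {x ∈ V(G) : d_G(x, v_i) = d_G(x, V(P))}. Then for every vertex x ∈ V_i, the unique u-x path in T contains the vertex v_i, and d_T(v_i, x) = d_G(v_i, x). -/

import Mathlib

/-!
The `u`–`v` path of `T` has `G`-length `d_T(u, v) = d_G(u, v)`, so by uniqueness it is `P`.
Let `m` be the first vertex of `P` on the tree path from `x` to `u`. Following that path to `m`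
and then `P` to either endpoint gives the tree paths from `x` to `u` and to `v`, hence
`d_G(u, x) = d_G(u, m) + d_T(m, x)` and `d_G(v, x) = d_G(v, m) + d_T(m, x)`. Adding these and
comparing with the triangle inequalities through `v_i`, where
`d_G(v_i, x) ≤ d_G(m, x) ≤ d_T(m, x)` and `d_G(u, m) + d_G(m, v) = d_G(u, v_i) + d_G(v_i, v)`,
forces `d_T(m, x) = d_G(v_i, x)` and `d_G(u, m) = d_G(u, v_i)`; as the weights are positive,
distinct vertices of a shortest path have distinct distances from `u`, so `m = v_i`.
-/

open SimpleGraph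

def SimpleGraph.Walk.wlength {V : Type*} {G : SimpleGraph V} (w : V → V → ℝ) {x y : V}
    (p : G.Walk x y) : ℝ :=
  (p.darts.map fun d => w d.toProd.1 d.toProd.2).sum

noncomputable def SimpleGraph.wdist {V : Type*} (G : SimpleGraph V) (w : V → V → ℝ)
    (x y : V) : ℝ :=
  sInf {r : ℝ | ∃ p : G.Walk x y, p.wlength w = r}

noncomputable def SimpleGraph.wdistS {V : Type*} (G : SimpleGraph V) (w : V → V → ℝ)
    (x : V) (S : Set V) : ℝ :=
  sInf (G.wdist w x '' S)

/-- `Vset G w P i` is the set of vertices whose nearest vertex on the walk `P` is `P.getVert i`,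
i.e. `V_i = {x : d_G(x, v_i) = d_G(x, V(P))}`. -/
def Vset {V : Type*} (G : SimpleGraph V) (w : V → V → ℝ) {u v : V} (P : G.Walk u v)
    (i : ℕ) : Set V :=
  {x : V | G.wdist w x (P.getVert i) = G.wdistS w x {z | z ∈ P.support}}

namespace SimpleGraph

variable {V : Type*} {G : SimpleGraph V} {w : V → V → ℝ}

namespace Walk

@[simp] lemma wlength_cons {x y z : V} (h : G.Adj x y) (p : G.Walk y z) :
    (cons h p).wlength w = w x y + p.wlength w := by
  simp [wlength]

lemma wlength_append {x y z : V} (p : G.Walk x y) (q : G.Walk y z) :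
    (p.append q).wlength w = p.wlength w + q.wlength w := by
  simp [wlength, darts_append]

lemma wlength_reverse (hsymm : ∀ a b, w a b = w b a) {x y : V} (p : G.Walk x y) :
    p.reverse.wlength w = p.wlength w := by
  simp [wlength, darts_reverse, List.sum_reverse, Function.comp_def, hsymm]

lemma wlength_mapLe {G' : SimpleGraph V} (h : G ≤ G') {x y : V} (p : G.Walk x y) :
    (p.mapLe h).wlength w = p.wlength w := by
  simp [wlength, mapLe, darts_map, Function.comp_def]

lemma wlength_nonneg (hw : ∀ a b, G.Adj a b → 0 ≤ w a b) {x y : V} (p : G.Walk x y) :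
    0 ≤ p.wlength w :=
  List.sum_nonneg (by simpa using fun d _ => hw _ _ d.adj)

lemma wlength_pos (hw : ∀ a b, G.Adj a b → 0 < w a b) {x y : V} (p : G.Walk x y)
    (hxy : x ≠ y) : 0 < p.wlength w := by
  cases p with
  | nil => exact absurd rfl hxy
  | cons h p =>
    rw [wlength_cons]
    exact add_pos_of_pos_of_nonneg (hw _ _ h) (p.wlength_nonneg fun a b h => (hw a b h).le)

lemma wlength_bypass_le [DecidableEq V] (hw : ∀ a b, G.Adj a b → 0 ≤ w a b) {x y : V}
    (p : G.Walk x y) : p.bypass.wlength w ≤ p.wlength w :=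
  (p.darts_bypass_sublist_darts.map _).sum_le_sum (by simpa using fun d _ => hw _ _ d.adj)

lemma exists_eq_append_of_first_mem {S : Set V} {x y : V} (p : G.Walk x y) (hy : y ∈ S) :
    ∃ (z : V) (p₁ : G.Walk x z) (p₂ : G.Walk z y),
      p = p₁.append p₂ ∧ z ∈ S ∧ ∀ a ∈ p₁.support, a ∈ S → a = z := by
  induction p with
  | nil => exact ⟨_, nil, nil, rfl, hy, by simp⟩
  | @cons a b y h p ih =>
    by_cases ha : a ∈ S
    · exact ⟨a, nil, cons h p, rfl, ha, by simp⟩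
    · obtain ⟨z, p₁, p₂, rfl, hz, hfirst⟩ := ih hy
      refine ⟨z, cons h p₁, p₂, rfl, hz, ?_⟩
      intro c hc hcS
      rw [support_cons, List.mem_cons] at hc
      rcases hc with rfl | hc
      · exact absurd hcS ha
      · exact hfirst c hc hcS

lemma IsPath.append_of_support_inter {x y z : V} {p : G.Walk x y} {q : G.Walk y z}
    (hp : p.IsPath) (hq : q.IsPath) (hpq : ∀ a ∈ p.support, a ∈ q.support → a = y) :
    (p.append q).IsPath := by
  rw [isPath_def, support_append, List.nodup_append]
  refine ⟨hp.support_nodup, hq.support_nodup.sublist (List.tail_sublist _), ?_⟩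
  rintro a ha _ hb rfl
  have hyq := q.cons_tail_support ▸ hq.support_nodup
  exact (List.nodup_cons.mp hyq).1 (hpq a ha (List.mem_of_mem_tail hb) ▸ hb)

end Walk

open Walk

variable {x y z : V}

lemma wdist_le_wlength (hw : ∀ a b, G.Adj a b → 0 ≤ w a b) (p : G.Walk x y) :
    G.wdist w x y ≤ p.wlength w :=
  csInf_le ⟨0, fun _ ⟨q, hq⟩ => hq ▸ q.wlength_nonneg hw⟩ ⟨p, rfl⟩

lemma wdist_nonneg (hw : ∀ a b, G.Adj a b → 0 ≤ w a b) (x y : V) : 0 ≤ G.wdist w x y :=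
  Real.sInf_nonneg fun _ ⟨q, hq⟩ => hq ▸ q.wlength_nonneg hw

lemma wdist_comm (hsymm : ∀ a b, w a b = w b a) (x y : V) :
    G.wdist w x y = G.wdist w y x := by
  have key : ∀ a b : V, {r | ∃ p : G.Walk a b, p.wlength w = r} ⊆
      {r | ∃ p : G.Walk b a, p.wlength w = r} :=
    fun _ _ _ ⟨p, hp⟩ => ⟨p.reverse, (p.wlength_reverse hsymm).trans hp⟩
  exact congrArg sInf ((key x y).antisymm (key y x))

lemma Reachable.exists_isPath_wlength_eq_wdist [Finite V]
    (hw : ∀ a b, G.Adj a b → 0 ≤ w a b) (h : G.Reachable x y) :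
    ∃ p : G.Walk x y, p.IsPath ∧ p.wlength w = G.wdist w x y := by
  classical
  have := Fintype.ofFinite V
  obtain ⟨q₀⟩ := h
  obtain ⟨p, -, hmin⟩ := Set.exists_min_image Set.univ (fun p : G.Path x y => p.1.wlength w)
    Set.finite_univ ⟨⟨q₀.bypass, q₀.bypass_isPath⟩, trivial⟩
  refine ⟨p, p.isPath, le_antisymm ?_ (wdist_le_wlength hw _)⟩
  refine le_csInf ⟨_, q₀, rfl⟩ ?_
  rintro _ ⟨q, rfl⟩
  exact (hmin ⟨q.bypass, q.bypass_isPath⟩ trivial).trans (q.wlength_bypass_le hw)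

lemma wdist_triangle [Finite V] (hw : ∀ a b, G.Adj a b → 0 ≤ w a b) (hxy : G.Reachable x y)
    (hyz : G.Reachable y z) : G.wdist w x z ≤ G.wdist w x y + G.wdist w y z := by
  obtain ⟨p, -, hp⟩ := hxy.exists_isPath_wlength_eq_wdist hw
  obtain ⟨q, -, hq⟩ := hyz.exists_isPath_wlength_eq_wdist hw
  simpa only [wlength_append, hp, hq] using wdist_le_wlength hw (p.append q)

protected lemma Reachable.wdist_anti [Finite V] {G' : SimpleGraph V} (h : G ≤ G')
    (hw : ∀ a b, G'.Adj a b → 0 ≤ w a b) (hr : G.Reachable x y) :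
    G'.wdist w x y ≤ G.wdist w x y := by
  obtain ⟨p, -, hp⟩ := hr.exists_isPath_wlength_eq_wdist fun a b hab => hw a b (h hab)
  simpa only [wlength_mapLe, hp] using wdist_le_wlength hw (p.mapLe h)

lemma wdist_pos [Finite V] (hw : ∀ a b, G.Adj a b → 0 < w a b) (h : G.Reachable x y)
    (hxy : x ≠ y) : 0 < G.wdist w x y := by
  obtain ⟨p, -, hp⟩ := h.exists_isPath_wlength_eq_wdist fun a b hab => (hw a b hab).le
  exact hp ▸ p.wlength_pos hw hxy

lemma wdistS_le (hw : ∀ a b, G.Adj a b → 0 ≤ w a b) {S : Set V} (hy : y ∈ S) :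
    G.wdistS w x S ≤ G.wdist w x y :=
  csInf_le ⟨0, fun _ ⟨_, _, h⟩ => h ▸ wdist_nonneg hw _ _⟩ ⟨y, hy, rfl⟩

section Geodesic

variable [Finite V] [DecidableEq V] (hw : ∀ a b, G.Adj a b → 0 ≤ w a b) {p : G.Walk x y}
  (hp : p.wlength w = G.wdist w x y)
include hw hp

lemma wlength_takeUntil_eq_wdist (hz : z ∈ p.support) :
    (p.takeUntil z hz).wlength w = G.wdist w x z := by
  have := wdist_triangle hw ⟨p.takeUntil z hz⟩ ⟨p.dropUntil z hz⟩
  have := wdist_le_wlength hw (p.takeUntil z hz)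
  have := wdist_le_wlength hw (p.dropUntil z hz)
  rw [← p.take_spec hz, wlength_append] at hp
  linarith

lemma wlength_dropUntil_eq_wdist (hz : z ∈ p.support) :
    (p.dropUntil z hz).wlength w = G.wdist w z y := by
  have := wdist_triangle hw ⟨p.takeUntil z hz⟩ ⟨p.dropUntil z hz⟩
  have := wdist_le_wlength hw (p.takeUntil z hz)
  have := wdist_le_wlength hw (p.dropUntil z hz)
  rw [← p.take_spec hz, wlength_append] at hp
  linarith

lemma wdist_add_wdist_of_mem_support (hz : z ∈ p.support) :
    G.wdist w x z + G.wdist w z y = G.wdist w x y := by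
  rw [← wlength_takeUntil_eq_wdist hw hp hz, ← wlength_dropUntil_eq_wdist hw hp hz,
    ← wlength_append, take_spec, hp]

end Geodesic

lemma eq_of_mem_support_of_wdist_eq [Finite V] [DecidableEq V]
    (hw : ∀ a b, G.Adj a b → 0 < w a b) {p : G.Walk x y} (hp : p.wlength w = G.wdist w x y)
    {z₁ z₂ : V} (hz₁ : z₁ ∈ p.support) (hz₂ : z₂ ∈ p.support)
    (hd : G.wdist w x z₁ = G.wdist w x z₂) : z₁ = z₂ := by
  have hw₀ : ∀ a b, G.Adj a b → 0 ≤ w a b := fun a b h => (hw a b h).le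
  by_contra hne
  rw [← p.take_spec hz₁, mem_support_append_iff] at hz₂
  rcases hz₂ with hz₂ | hz₂
  · have := wdist_add_wdist_of_mem_support hw₀ (wlength_takeUntil_eq_wdist hw₀ hp hz₁) hz₂
    linarith [wdist_pos hw ⟨(p.takeUntil z₁ hz₁).dropUntil z₂ hz₂⟩ (Ne.symm hne)]
  · have := wdist_add_wdist_of_mem_support hw₀ (wlength_dropUntil_eq_wdist hw₀ hp hz₁) hz₂
    have := wdist_add_wdist_of_mem_support hw₀ hp hz₁
    have := wdist_add_wdist_of_mem_support hw₀ hp (p.support_dropUntil_subset_support hz₁ hz₂)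
    linarith [wdist_pos hw ⟨(p.dropUntil z₁ hz₁).takeUntil z₂ hz₂⟩ hne]

namespace IsTree

variable (hT : G.IsTree) (hw : ∀ a b, G.Adj a b → 0 ≤ w a b)
include hT hw

lemma wlength_eq_wdist {p : G.Walk x y} (hp : p.IsPath) : p.wlength w = G.wdist w x y := by
  classical
  refine le_antisymm (le_csInf ⟨_, p, rfl⟩ ?_) (wdist_le_wlength hw p)
  rintro _ ⟨q, rfl⟩
  rw [(hT.existsUnique_path x y).unique hp q.bypass_isPath]
  exact q.wlength_bypass_le hw

lemma wdist_eq_add_of_mem_support [DecidableEq V] {p : G.Walk x y} (hp : p.IsPath)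
    (hz : z ∈ p.support) : G.wdist w x y = G.wdist w x z + G.wdist w z y := by
  rw [← hT.wlength_eq_wdist hw hp, ← hT.wlength_eq_wdist hw (hp.takeUntil hz),
    ← hT.wlength_eq_wdist hw (hp.dropUntil hz), ← wlength_append, take_spec]

/-- The gate `m` of `x` on the path `p`: where the tree path from `x` first meets `p`. -/
lemma exists_gate [DecidableEq V] {u v : V} {p : G.Walk u v} (hp : p.IsPath) (x : V) :
    ∃ m ∈ p.support, (∀ q : G.Walk u x, q.IsPath → m ∈ q.support) ∧
      G.wdist w u x = G.wdist w u m + G.wdist w m x ∧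
      G.wdist w v x = G.wdist w v m + G.wdist w m x := by
  obtain ⟨q, hq, hq_unique⟩ := hT.existsUnique_path x u
  obtain ⟨m, q₁, q₂, rfl, hm, hfirst⟩ :=
    q.exists_eq_append_of_first_mem (S := {a | a ∈ p.support}) p.start_mem_support
  have hmq : m ∈ (q₁.append q₂).reverse.support := by simp
  have hq₁v : (q₁.append (p.dropUntil m hm)).IsPath :=
    hq.of_append_left.append_of_support_inter (hp.dropUntil hm)
      fun a ha ha' => hfirst a ha (p.support_dropUntil_subset_support hm ha')
  refine ⟨m, hm, fun q' hq' => ?_, hT.wdist_eq_add_of_mem_support hw hq.reverse hmq,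
    hT.wdist_eq_add_of_mem_support hw hq₁v.reverse (by simp)⟩
  rw [← hq_unique q'.reverse hq'.reverse] at hmq
  simpa using hmq

end IsTree

end SimpleGraph

theorem tree_path_through_nearest_vertex_general {V : Type*} [Fintype V] (G : SimpleGraph V)
    (hG : G.Connected) (w : V → V → ℝ) (hsymm : ∀ a b : V, w a b = w b a)
    (hpos : ∀ a b : V, G.Adj a b → 0 < w a b) (u v : V)
    (T : SimpleGraph V) (hTG : T ≤ G) (hT : T.IsTree)
    (hdpu : ∀ x : V, T.wdist w u x = G.wdist w u x)
    (hdpv : ∀ x : V, T.wdist w v x = G.wdist w v x)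
    (P : G.Walk u v) (hPshort : P.wlength w = G.wdist w u v)
    (hPuniq : ∀ Q : G.Walk u v, Q.IsPath → Q.wlength w = G.wdist w u v → Q = P) :
    ∀ i : ℕ, i ≤ P.length → ∀ x : V, x ∈ Vset G w P i →
      (∀ p : T.Walk u x, p.IsPath → P.getVert i ∈ p.support) ∧
        T.wdist w (P.getVert i) x = G.wdist w (P.getVert i) x := by
  classical
  intro i _ x hx
  have hw : ∀ a b, G.Adj a b → 0 ≤ w a b := fun a b h => (hpos a b h).le
  have hwT : ∀ a b, T.Adj a b → 0 ≤ w a b := fun a b h => hw a b (hTG h)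
  obtain ⟨PT, hPT, -⟩ := hT.existsUnique_path u v
  have hPT_eq : PT.mapLe hTG = P := hPuniq _ (Walk.isPath_mapLe hTG |>.mpr hPT) <| by
    rw [Walk.wlength_mapLe, hT.wlength_eq_wdist hwT hPT, hdpu]
  obtain ⟨m, hm, hm_path, hux, hvx⟩ := hT.exists_gate hwT hPT x
  have hmP : m ∈ P.support := by rwa [← hPT_eq, Walk.support_mapLe_eq_support]
  set z := P.getVert i
  have hzP : z ∈ P.support := P.getVert_mem_support i
  have hzm : G.wdist w z x ≤ T.wdist w m x := calc
    G.wdist w z x = G.wdist w x z := wdist_comm hsymm _ _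
    _ ≤ G.wdist w x m := hx.trans_le (wdistS_le hw hmP)
    _ = G.wdist w m x := wdist_comm hsymm _ _
    _ ≤ T.wdist w m x := (hT.connected.preconnected m x).wdist_anti hTG hw
  rw [hdpu, hdpu] at hux
  rw [hdpv, hdpv] at hvx
  have hm_split := wdist_add_wdist_of_mem_support hw hPshort hmP
  have hz_split := wdist_add_wdist_of_mem_support hw hPshort hzP
  rw [wdist_comm hsymm m v] at hm_split
  rw [wdist_comm hsymm z v] at hz_split
  have hu_tri := wdist_triangle hw (hG.preconnected u z) (hG.preconnected z x)
  have hv_tri := wdist_triangle hw (hG.preconnected v z) (hG.preconnected z x)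
  obtain rfl : m = z := eq_of_mem_support_of_wdist_eq hpos hPshort hmP hzP (by linarith)
  exact ⟨hm_path, by linarith⟩

/-- For every vertex `x ∈ V_i`, the unique `u`-`x` path in the common distance-preserving
spanning tree `T` contains the vertex `v_i`, and `d_T(v_i, x) = d_G(v_i, x)`. -/
theorem tree_path_through_nearest_vertex {V : Type*} [Fintype V] (G : SimpleGraph V)
    (hG : G.Connected) (w : V → V → ℝ) (hsymm : ∀ a b : V, w a b = w b a)
    (hpos : ∀ a b : V, G.Adj a b → 0 < w a b) (u v : V)
    (T : SimpleGraph V) (hTG : T ≤ G) (hT : T.IsTree)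
    (hdpu : ∀ x : V, T.wdist w u x = G.wdist w u x)
    (hdpv : ∀ x : V, T.wdist w v x = G.wdist w v x)
    (P : G.Walk u v) (hP : P.IsPath) (hPshort : P.wlength w = G.wdist w u v)
    (hPuniq : ∀ Q : G.Walk u v, Q.IsPath → Q.wlength w = G.wdist w u v → Q = P) :
    ∀ i : ℕ, i ≤ P.length → ∀ x : V, x ∈ Vset G w P i →
      (∀ p : T.Walk u x, p.IsPath → P.getVert i ∈ p.support) ∧
        T.wdist w (P.getVert i) x = G.wdist w (P.getVert i) x :=
  tree_path_through_nearest_vertex_general G hG w hsymm hpos u v T hTG hT hdpu hdpv P hPshort hPuniq
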